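/- arXiv:1904.03537 — 7 statements merged into one kernel-verified Lean document; each statement's English description precedes it below -/
import Mathlib

section
/- Let E be a real inner product space and let g, h : E → ℝ be differentiable functions, and let L > 0. Then the following are equivalent: (i) both L·h − g and L·h + g are convex on E; (ii) for all x, y ∈ E, |g(x) − g(y) − ⟨∇g(y), x − y⟩| ≤ L·D_h(x, y), where D_h(x, y) := h(x) − h(y) − ⟨∇h(y), x − y⟩. (Extended Descent Lemma, full-domain case.) -/
/-!
Both conditions are first-order: a differentiable function is convex exactly when it lies above
its tangent planes, and the tangent-plane inequalities for `L * h - g` and `L * h + g` read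
`D_g ≤ L * D_h` and `-D_g ≤ L * D_h`.
-/

open RealInnerProductSpace Set

section FirstOrder

variable {E : Type*} [NormedAddCommGroup E] [NormedSpace ℝ E] {s : Set E} {f : E → ℝ}

theorem ConvexOn.fderiv_sub_le {f' : E →L[ℝ] ℝ} {x y : E} (hf : ConvexOn ℝ s f) (hx : x ∈ s)
    (hy : y ∈ s) (hf' : HasFDerivAt f f' y) : f' (x - y) ≤ f x - f y := by
  have hline : ConvexOn ℝ (AffineMap.lineMap (k := ℝ) y x ⁻¹' s)
      (f ∘ AffineMap.lineMap (k := ℝ) y x) :=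
    hf.comp_affineMap (AffineMap.lineMap y x)
  have hderiv : HasDerivAt (f ∘ AffineMap.lineMap (k := ℝ) y x) (f' (x - y)) 0 :=
    (AffineMap.lineMap_apply_zero (k := ℝ) y x ▸ hf').comp_hasDerivAt 0
      AffineMap.hasDerivAt_lineMap
  simpa [slope_def_field] using
    hline.le_slope_of_hasDerivAt (by simpa) (by simpa) one_pos hderiv

theorem convexOn_of_forall_sub_le (hs : Convex ℝ s) (f' : E → E →L[ℝ] ℝ)
    (hf' : ∀ x ∈ s, ∀ y ∈ s, f' y (x - y) ≤ f x - f y) : ConvexOn ℝ s f := by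
  refine ⟨hs, fun x hx y hy a b ha hb hab => ?_⟩
  set z := a • x + b • y
  have hz : z ∈ s := hs hx hy ha hb hab
  have hbalance : a * f' z (x - z) + b * f' z (y - z) = 0 := by
    have : a • (x - z) + b • (y - z) = 0 := by
      rw [show a • (x - z) + b • (y - z) = z - (a + b) • z by module, hab, one_smul, sub_self]
    simpa using congrArg (f' z) this
  have hx' := mul_le_mul_of_nonneg_left (hf' x hx z hz) ha
  have hy' := mul_le_mul_of_nonneg_left (hf' y hy z hz) hb
  have hfz : (a + b) * f z = f z := by rw [hab, one_mul]
  simp only [smul_eq_mul]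
  linarith

theorem convexOn_iff_forall_fderiv_sub_le (hs : Convex ℝ s) (f' : E → E →L[ℝ] ℝ)
    (hf : ∀ x ∈ s, HasFDerivAt f (f' x) x) :
    ConvexOn ℝ s f ↔ ∀ x ∈ s, ∀ y ∈ s, f' y (x - y) ≤ f x - f y :=
  ⟨fun hconv _ hx y hy => hconv.fderiv_sub_le hx hy (hf y hy), convexOn_of_forall_sub_le hs f'⟩

end FirstOrder

theorem extended_descent_lemma_general {E : Type*} [NormedAddCommGroup E] [InnerProductSpace ℝ E]
    (g h : E → ℝ) (g' h' : E → E)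
    (hg : ∀ x, HasFDerivAt g (innerSL ℝ (g' x)) x)
    (hh : ∀ x, HasFDerivAt h (innerSL ℝ (h' x)) x)
    (L : ℝ) :
    (ConvexOn ℝ Set.univ (fun x => L * h x - g x) ∧
      ConvexOn ℝ Set.univ (fun x => L * h x + g x)) ↔
    (∀ x y : E, |g x - g y - ⟪g' y, x - y⟫| ≤
      L * (h x - h y - ⟪h' y, x - y⟫)) := by
  have hsub (x : E) : HasFDerivAt (fun x => L * h x - g x) (innerSL ℝ (L • h' x - g' x)) x :=
    (((hh x).const_mul L).fun_sub (hg x)).congr_fderiv (by rw [map_sub, map_smul])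
  have hadd (x : E) : HasFDerivAt (fun x => L * h x + g x) (innerSL ℝ (L • h' x + g' x)) x :=
    (((hh x).const_mul L).fun_add (hg x)).congr_fderiv (by rw [map_add, map_smul])
  rw [convexOn_iff_forall_fderiv_sub_le convex_univ _ fun x _ => hsub x,
    convexOn_iff_forall_fderiv_sub_le convex_univ _ fun x _ => hadd x]
  simp only [mem_univ, forall_const, innerSL_apply_apply, ← forall_and]
  refine forall₂_congr fun x y => ?_
  simp only [abs_le, inner_sub_left, inner_add_left, inner_smul_left, RCLike.conj_to_real]
  constructor <;> rintro ⟨_, _⟩ <;> constructor <;> linarith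

/-- Extended Descent Lemma (full-domain case): for differentiable `g h : E → ℝ` with
gradients `g' h' : E → E` (expressed via `HasFDerivAt` and `innerSL`), and `L > 0`,
the pair `(g, h)` is `L`-smooth adaptable on `E` (i.e. `L•h - g` and `L•h + g` are
convex on `E`) if and only if
`|g x - g y - ⟪∇g y, x - y⟫| ≤ L * D_h(x, y)` for all `x, y ∈ E`, where
`D_h(x, y) = h x - h y - ⟪∇h y, x - y⟫` is the Bregman distance. -/
theorem extended_descent_lemma {E : Type*} [NormedAddCommGroup E] [InnerProductSpace ℝ E]
    (g h : E → ℝ) (g' h' : E → E)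
    (hg : ∀ x, HasFDerivAt g (innerSL ℝ (g' x)) x)
    (hh : ∀ x, HasFDerivAt h (innerSL ℝ (h' x)) x)
    (L : ℝ) (hL : 0 < L) :
    (ConvexOn ℝ Set.univ (fun x => L * h x - g x) ∧
      ConvexOn ℝ Set.univ (fun x => L * h x + g x)) ↔
    (∀ x y : E, |g x - g y - ⟪g' y, x - y⟫| ≤
      L * (h x - h y - ⟪h' y, x - y⟫)) :=
  extended_descent_lemma_general g h g' h' hg hh L
end

section
/- Let E be a real inner product space and let h : E → ℝ be a convex differentiable function. Suppose α ∈ (0, 1] satisfies α·D_h(x, y) ≤ D_h(y, x) for all x, y ∈ E (a positive lower bound on the symmetry coefficient of h). Then for every κ > 0 there exists γ* > 0 such that for all γ ∈ [0, γ*] and all x₁, x₂ ∈ E, setting y := x₁ + γ(x₁ − x₂), one has D_h(x₁, y) ≤ κ·D_h(x₂, x₁). (General Extrapolation Behavior.) -/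
/-!
Write `D(x, y)` for the Bregman distance, `y = x₁ + γ (x₁ - x₂)` and `B = D(x₂, x₁) ≥ 0`.
By the three-point identity, the symmetry bounds `α D(x₂, y) ≤ D(y, x₂)`, `α D(x₁, y) ≤ D(y, x₁)`
and `α D(x₁, x₂) ≤ D(x₂, x₁)` combine, for `0 ≤ γ ≤ α`, into `α² D(x₁, y) ≤ γ B`.
Hence `γ* = min α (κ α²)` works.
-/

open RealInnerProductSpace

theorem ConvexOn.apply_sub_le_sub_of_hasFDerivAt {E : Type*} [NormedAddCommGroup E]
    [NormedSpace ℝ E] {f : E → ℝ} {f' : E →L[ℝ] ℝ} {x : E} (hf : ConvexOn ℝ Set.univ f)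
    (hx : HasFDerivAt f f' x) (y : E) :
    f' (y - x) ≤ f y - f x := by
  have hline : ConvexOn ℝ Set.univ (f ∘ AffineMap.lineMap (k := ℝ) x y) :=
    hf.comp_affineMap _
  have hderiv : HasDerivAt (f ∘ AffineMap.lineMap (k := ℝ) x y) (f' (y - x)) 0 := by
    have hx0 : HasFDerivAt f f' (AffineMap.lineMap (k := ℝ) x y 0) := by
      rwa [AffineMap.lineMap_apply_zero]
    exact hx0.comp_hasDerivAt 0 AffineMap.hasDerivAt_lineMap
  simpa [slope_def_field] using
    hline.le_slope_of_hasDerivAt (Set.mem_univ 0) (Set.mem_univ 1) one_pos hderiv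

section Bregman

variable {E : Type*} [NormedAddCommGroup E] [InnerProductSpace ℝ E]

noncomputable def bregman (h : E → ℝ) (h' : E → E) (x y : E) : ℝ :=
  h x - h y - ⟪h' y, x - y⟫

variable {h : E → ℝ} {h' : E → E}

theorem bregman_nonneg (hconv : ConvexOn ℝ Set.univ h)
    (hdiff : ∀ x, HasFDerivAt h (innerSL ℝ (h' x)) x) (x y : E) :
    0 ≤ bregman h h' x y := by
  have := hconv.apply_sub_le_sub_of_hasFDerivAt (hdiff y) x
  rw [innerSL_apply_apply] at this
  unfold bregman
  linarith

theorem bregman_add_bregman_swap (x y : E) :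
    bregman h h' x y + bregman h h' y x = ⟪h' x - h' y, x - y⟫ := by
  simp only [bregman, inner_sub_left, inner_sub_right]
  ring

theorem bregman_three_point (x y z : E) :
    bregman h h' x z = bregman h h' x y + bregman h h' y z + ⟪h' y - h' z, x - y⟫ := by
  simp only [bregman, inner_sub_left, inner_sub_right]
  ring

variable (γ : ℝ) (x₁ x₂ : E)

theorem smul_bregman_extrapolate_left :
    γ * bregman h h' x₂ (x₁ + γ • (x₁ - x₂)) =
      γ * (bregman h h' x₂ x₁ + bregman h h' x₁ (x₁ + γ • (x₁ - x₂))) +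
        (bregman h h' x₁ (x₁ + γ • (x₁ - x₂)) + bregman h h' (x₁ + γ • (x₁ - x₂)) x₁) := by
  rw [bregman_add_bregman_swap, bregman_three_point x₂ x₁, mul_add _ _ ⟪_, _⟫,
    ← real_inner_smul_right]
  congr 2
  module

theorem bregman_extrapolate_right :
    bregman h h' (x₁ + γ • (x₁ - x₂)) x₂ =
      bregman h h' (x₁ + γ • (x₁ - x₂)) x₁ + bregman h h' x₁ x₂ +
        γ * (bregman h h' x₁ x₂ + bregman h h' x₂ x₁) := by
  rw [bregman_add_bregman_swap, bregman_three_point _ x₁ x₂, ← real_inner_smul_right]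
  congr 2
  module

variable {γ x₁ x₂}

theorem sq_mul_bregman_extrapolate_le {α : ℝ}
    (hsym : ∀ x y : E, α * bregman h h' x y ≤ bregman h h' y x)
    (hγ0 : 0 ≤ γ) (hγα : γ ≤ α) (hB : 0 ≤ bregman h h' x₂ x₁) :
    α ^ 2 * bregman h h' x₁ (x₁ + γ • (x₁ - x₂)) ≤ γ * bregman h h' x₂ x₁ := by
  have hleft := smul_bregman_extrapolate_left (h := h) (h' := h') γ x₁ x₂
  have hright := bregman_extrapolate_right (h := h) (h' := h') γ x₁ x₂
  set y := x₁ + γ • (x₁ - x₂)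
  have hα : 0 ≤ α := hγ0.trans hγα
  have key : (1 + α) * (α ^ 2 * bregman h h' x₁ y) ≤ (1 + α) * (γ * bregman h h' x₂ x₁) := by
    linear_combination -α ^ 2 * hleft + α * γ * hright +
      mul_nonneg (mul_nonneg hα hγ0) (sub_nonneg.2 (hsym x₂ y)) +
      mul_nonneg (mul_nonneg hα (sub_nonneg.2 hγα)) (sub_nonneg.2 (hsym x₁ y)) +
      mul_nonneg (mul_nonneg hγ0 (by linarith : 0 ≤ 1 + γ)) (sub_nonneg.2 (hsym x₁ x₂)) +
      mul_nonneg (mul_nonneg (mul_nonneg hγ0 (sub_nonneg.2 hγα)) (by linarith : 0 ≤ 1 + α)) hB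
  exact le_of_mul_le_mul_left key (by linarith)

end Bregman

theorem general_extrapolation_behavior_general
    {E : Type*} [NormedAddCommGroup E] [InnerProductSpace ℝ E]
    (h : E → ℝ) (h' : E → E)
    (hconv : ConvexOn ℝ Set.univ h)
    (hdiff : ∀ x, HasFDerivAt h (innerSL ℝ (h' x)) x)
    (α : ℝ) (hα0 : 0 < α)
    (hsym : ∀ x y : E,
      α * (h x - h y - ⟪h' y, x - y⟫) ≤ h y - h x - ⟪h' x, y - x⟫) :
    ∀ κ : ℝ, 0 < κ → ∃ γstar : ℝ, 0 < γstar ∧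
      ∀ γ : ℝ, γ ∈ Set.Icc (0 : ℝ) γstar → ∀ x₁ x₂ : E,
        h x₁ - h (x₁ + γ • (x₁ - x₂)) -
            ⟪h' (x₁ + γ • (x₁ - x₂)), x₁ - (x₁ + γ • (x₁ - x₂))⟫ ≤
          κ * (h x₂ - h x₁ - ⟪h' x₁, x₂ - x₁⟫) := by
  intro κ hκ
  refine ⟨min α (κ * α ^ 2), lt_min hα0 (by positivity), ?_⟩
  rintro γ ⟨hγ0, hγ⟩ x₁ x₂
  have hB := bregman_nonneg hconv hdiff x₂ x₁
  have hA := sq_mul_bregman_extrapolate_le hsym hγ0 (hγ.trans (min_le_left _ _)) hB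
  have hγκ : γ * bregman h h' x₂ x₁ ≤ κ * α ^ 2 * bregman h h' x₂ x₁ :=
    mul_le_mul_of_nonneg_right (hγ.trans (min_le_right _ _)) hB
  change bregman h h' x₁ (x₁ + γ • (x₁ - x₂)) ≤ κ * bregman h h' x₂ x₁
  have hscaled : α ^ 2 * bregman h h' x₁ (x₁ + γ • (x₁ - x₂)) ≤
      α ^ 2 * (κ * bregman h h' x₂ x₁) := by
    linarith
  exact le_of_mul_le_mul_left hscaled (by positivity)

/-- General Extrapolation Behavior: let `h : E → ℝ` be convex and differentiable with
gradient `h'`, and suppose `α ∈ (0, 1]` is a lower bound on the symmetry coefficient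
of `h`, i.e. `α * D_h(x, y) ≤ D_h(y, x)` for all `x, y`, where
`D_h(x, y) = h x - h y - ⟪h' y, x - y⟫` is the Bregman distance. Then for every
`κ > 0` there exists `γ* > 0` such that for all `γ ∈ [0, γ*]` and all `x₁, x₂ ∈ E`,
setting `y = x₁ + γ • (x₁ - x₂)`, one has `D_h(x₁, y) ≤ κ * D_h(x₂, x₁)`. -/
theorem general_extrapolation_behavior
    {E : Type*} [NormedAddCommGroup E] [InnerProductSpace ℝ E]
    (h : E → ℝ) (h' : E → E)
    (hconv : ConvexOn ℝ Set.univ h)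
    (hdiff : ∀ x, HasFDerivAt h (innerSL ℝ (h' x)) x)
    (α : ℝ) (hα0 : 0 < α) (hα1 : α ≤ 1)
    (hsym : ∀ x y : E,
      α * (h x - h y - ⟪h' y, x - y⟫) ≤ h y - h x - ⟪h' x, y - x⟫) :
    ∀ κ : ℝ, 0 < κ → ∃ γstar : ℝ, 0 < γstar ∧
      ∀ γ : ℝ, γ ∈ Set.Icc (0 : ℝ) γstar → ∀ x₁ x₂ : E,
        h x₁ - h (x₁ + γ • (x₁ - x₂)) -
            ⟪h' (x₁ + γ • (x₁ - x₂)), x₁ - (x₁ + γ • (x₁ - x₂))⟫ ≤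
          κ * (h x₂ - h x₁ - ⟪h' x₁, x₂ - x₁⟫) :=
  general_extrapolation_behavior_general h h' hconv hdiff α hα0 hsym
end

section
/- Let E be a real inner product space and let h : E → ℝ be a convex differentiable function. Suppose α ∈ (0, 1] satisfies α·D_h(x, y) ≤ D_h(y, x) for all x, y ∈ E. Let x₁, x₂ ∈ E, let γ ≥ 0 satisfy α²(1 + γ) − γ > 0, and set y := x₁ + γ(x₁ − x₂). Then D_h(x₁, y) ≤ [γ(γα + 1 + γ) / (α²(1 + γ) − γ)] · D_h(x₂, x₁). -/
/-!
Write `D` for the Bregman divergence and `y = x₁ + γ (x₁ - x₂)`. Since `x₁` is the convex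
combination of `y` and `x₂` with weights `1/(1+γ)` and `γ/(1+γ)`, convexity of `D(·, y)` gives
`(1+γ) D(x₁, y) ≤ γ D(x₂, y) ≤ (γ/α) D(y, x₂)`. The three-point identity splits
`D(y, x₂) = D(y, x₁) + (1+γ) D(x₁, x₂) + γ D(x₂, x₁)`, and α-symmetry once more bounds the first
two terms by `D(x₁, y)/α` and `(1+γ) D(x₂, x₁)/α`; collecting the `D(x₁, y)` terms gives the claim.
-/

open RealInnerProductSpace Set

section Bregman

variable {E : Type*} [NormedAddCommGroup E] [InnerProductSpace ℝ E] (h : E → ℝ) (h' : E → E)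

def bregmanDiv (x y : E) : ℝ := h x - h y - ⟪h' y, x - y⟫

@[simp]
theorem bregmanDiv_self (x : E) : bregmanDiv h h' x x = 0 := by
  simp [bregmanDiv]

theorem bregmanDiv_add_bregmanDiv_swap (x y : E) :
    bregmanDiv h h' x y + bregmanDiv h h' y x = ⟪h' x - h' y, x - y⟫ := by
  simp only [bregmanDiv, inner_sub_left, ← neg_sub x y, inner_neg_right]
  ring

theorem bregmanDiv_three_point (x y z : E) :
    bregmanDiv h h' x z = bregmanDiv h h' x y + bregmanDiv h h' y z + ⟪h' y - h' z, x - y⟫ := by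
  simp only [bregmanDiv, inner_sub_left, inner_sub_right]
  ring

theorem bregmanDiv_extrapolate_swap (x₁ x₂ : E) (γ : ℝ) :
    bregmanDiv h h' (x₁ + γ • (x₁ - x₂)) x₂ = bregmanDiv h h' (x₁ + γ • (x₁ - x₂)) x₁ +
      (1 + γ) * bregmanDiv h h' x₁ x₂ + γ * bregmanDiv h h' x₂ x₁ := by
  rw [bregmanDiv_three_point h h' _ x₁, add_sub_cancel_left, inner_smul_right,
    ← bregmanDiv_add_bregmanDiv_swap]
  ring

variable {h}

theorem convexOn_bregmanDiv_left (hconv : ConvexOn ℝ univ h) (v : E) :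
    ConvexOn ℝ univ (bregmanDiv h h' · v) := by
  have hD : (bregmanDiv h h' · v) = fun u ↦ h u - innerSL ℝ (h' v) u + (⟪h' v, v⟫ - h v) := by
    ext u
    rw [bregmanDiv, inner_sub_right, innerSL_apply_apply]
    ring
  rw [hD]
  exact (hconv.sub ((innerSL ℝ (h' v)).toLinearMap.concaveOn convex_univ)).add_const _

theorem bregmanDiv_extrapolate_le (hconv : ConvexOn ℝ univ h) (x₁ x₂ : E) {γ : ℝ} (hγ : 0 ≤ γ) :
    (1 + γ) * bregmanDiv h h' x₁ (x₁ + γ • (x₁ - x₂)) ≤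
      γ * bregmanDiv h h' x₂ (x₁ + γ • (x₁ - x₂)) := by
  set y := x₁ + γ • (x₁ - x₂)
  have hpos : 0 < 1 + γ := by linarith
  have hx₁ : (1 + γ)⁻¹ • y + (γ * (1 + γ)⁻¹) • x₂ = x₁ := by
    have hsum : y + γ • x₂ = (1 + γ) • x₁ := by module
    rw [mul_comm, mul_smul, ← smul_add, hsum, smul_smul, inv_mul_cancel₀ hpos.ne', one_smul]
  have hcomb : bregmanDiv h h' ((1 + γ)⁻¹ • y + (γ * (1 + γ)⁻¹) • x₂) y ≤
      (1 + γ)⁻¹ * bregmanDiv h h' y y + γ * (1 + γ)⁻¹ * bregmanDiv h h' x₂ y :=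
    (convexOn_bregmanDiv_left h' hconv y).2 (mem_univ y) (mem_univ x₂)
      (by positivity) (by positivity) (by field_simp)
  rw [hx₁, bregmanDiv_self, mul_zero, zero_add] at hcomb
  calc (1 + γ) * bregmanDiv h h' x₁ y ≤ (1 + γ) * (γ * (1 + γ)⁻¹ * bregmanDiv h h' x₂ y) :=
        mul_le_mul_of_nonneg_left hcomb hpos.le
    _ = γ * bregmanDiv h h' x₂ y := by field_simp

theorem bregmanDiv_extrapolate_mul_le (hconv : ConvexOn ℝ univ h) {α : ℝ} (hα : 0 ≤ α)
    (hsym : ∀ x y, α * bregmanDiv h h' x y ≤ bregmanDiv h h' y x) (x₁ x₂ : E) {γ : ℝ}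
    (hγ : 0 ≤ γ) :
    (α ^ 2 * (1 + γ) - γ) * bregmanDiv h h' x₁ (x₁ + γ • (x₁ - x₂)) ≤
      γ * (γ * α + 1 + γ) * bregmanDiv h h' x₂ x₁ := by
  have hconvex := bregmanDiv_extrapolate_le h' hconv x₁ x₂ hγ
  have hswap := bregmanDiv_extrapolate_swap h h' x₁ x₂ γ
  set y := x₁ + γ • (x₁ - x₂)
  calc (α ^ 2 * (1 + γ) - γ) * bregmanDiv h h' x₁ y
      ≤ α ^ 2 * γ * bregmanDiv h h' x₂ y - γ * bregmanDiv h h' x₁ y := by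
        linarith [mul_le_mul_of_nonneg_left hconvex (sq_nonneg α)]
    _ ≤ α * γ * bregmanDiv h h' y x₂ - γ * bregmanDiv h h' x₁ y := by
        linarith [mul_le_mul_of_nonneg_left (hsym x₂ y) (mul_nonneg hα hγ)]
    _ ≤ γ * (γ * α + 1 + γ) * bregmanDiv h h' x₂ x₁ := by
        rw [hswap]
        linarith [mul_le_mul_of_nonneg_left (hsym y x₁) hγ,
          mul_le_mul_of_nonneg_left (hsym x₁ x₂) (mul_nonneg hγ (by linarith : (0 : ℝ) ≤ 1 + γ))]

end Bregman

theorem extrapolation_bound_general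
    {E : Type*} [NormedAddCommGroup E] [InnerProductSpace ℝ E]
    (h : E → ℝ) (h' : E → E)
    (hconv : ConvexOn ℝ Set.univ h)
    (α : ℝ) (hα0 : 0 < α)
    (hsym : ∀ x y : E,
      α * (h x - h y - ⟪h' y, x - y⟫) ≤ h y - h x - ⟪h' x, y - x⟫)
    (x₁ x₂ : E) (γ : ℝ) (hγ : 0 ≤ γ)
    (hden : 0 < α ^ 2 * (1 + γ) - γ) :
    h x₁ - h (x₁ + γ • (x₁ - x₂)) -
        ⟪h' (x₁ + γ • (x₁ - x₂)), x₁ - (x₁ + γ • (x₁ - x₂))⟫ ≤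
      (γ * (γ * α + 1 + γ) / (α ^ 2 * (1 + γ) - γ)) *
        (h x₂ - h x₁ - ⟪h' x₁, x₂ - x₁⟫) := by
  rw [div_mul_eq_mul_div, le_div_iff₀' hden]
  exact bregmanDiv_extrapolate_mul_le h' hconv hα0.le hsym x₁ x₂ hγ

/-- Quantitative extrapolation bound: let `h : E → ℝ` be convex and differentiable with
gradient `h'`, and suppose `α ∈ (0, 1]` satisfies `α * D_h(x, y) ≤ D_h(y, x)` for all
`x, y`, where `D_h(x, y) = h x - h y - ⟪h' y, x - y⟫`. Let `γ ≥ 0` satisfy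
`α²(1 + γ) - γ > 0` and set `y = x₁ + γ • (x₁ - x₂)`. Then
`D_h(x₁, y) ≤ (γ(γα + 1 + γ) / (α²(1 + γ) - γ)) * D_h(x₂, x₁)`. -/
theorem extrapolation_bound
    {E : Type*} [NormedAddCommGroup E] [InnerProductSpace ℝ E]
    (h : E → ℝ) (h' : E → E)
    (hconv : ConvexOn ℝ Set.univ h)
    (hdiff : ∀ x, HasFDerivAt h (innerSL ℝ (h' x)) x)
    (α : ℝ) (hα0 : 0 < α) (hα1 : α ≤ 1)
    (hsym : ∀ x y : E,
      α * (h x - h y - ⟪h' y, x - y⟫) ≤ h y - h x - ⟪h' x, y - x⟫)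
    (x₁ x₂ : E) (γ : ℝ) (hγ : 0 ≤ γ)
    (hden : 0 < α ^ 2 * (1 + γ) - γ) :
    h x₁ - h (x₁ + γ • (x₁ - x₂)) -
        ⟪h' (x₁ + γ • (x₁ - x₂)), x₁ - (x₁ + γ • (x₁ - x₂))⟫ ≤
      (γ * (γ * α + 1 + γ) / (α ^ 2 * (1 + γ) - γ)) *
        (h x₂ - h x₁ - ⟪h' x₁, x₂ - x₁⟫) :=
  extrapolation_bound_general h h' hconv α hα0 hsym x₁ x₂ γ hγ hden
end

section
/- Let E be a real inner product space, let h : E → ℝ be convex and differentiable, g : E → ℝ differentiable, f : E → ℝ, and let α ∈ ℝ, τ > 0 and L̄, L ∈ ℝ with 1/τ ≥ L̄. Let x, x⁺, y ∈ E and ξ ∈ E satisfy: (i) f(u) ≥ f(x⁺) + ⟨ξ, u − x⁺⟩ + (α/2)‖u − x⁺‖² for all u ∈ E (ξ is a subgradient of the semi-convex function f at x⁺); (ii) ξ + ∇g(y) + (1/τ)(∇h(x⁺) − ∇h(y)) = 0 (first-order optimality of the Bregman proximal gradient step); (iii) g(x) ≥ g(y) + ⟨∇g(y), x − y⟩ −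 L·D_h(x, y); (iv) g(x⁺) ≤ g(y) + ⟨∇g(y), x⁺ − y⟩ + L̄·D_h(x⁺, y). Then, with Ψ := f + g, one has Ψ(x) ≥ Ψ(x⁺) + (1/τ)·D_h(x, x⁺) + (α/2)‖x⁺ − x‖² − (1/τ + L)·D_h(x, y). (Function Descent Property, one iteration of CoCaIn BPG.) -/
open RealInnerProductSpace

lemma bregman_nonneg_s4 {E : Type*} [NormedAddCommGroup E] [InnerProductSpace ℝ E]
    (h : E → ℝ) (h' : E → E) (hconv : ConvexOn ℝ Set.univ h)
    (hhdiff : ∀ z, HasFDerivAt h (innerSL ℝ (h' z)) z) (a b : E) :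
    0 ≤ h a - h b - ⟪h' b, a - b⟫ := by
  set A : ℝ →ᵃ[ℝ] E := AffineMap.lineMap b a with hA
  have hφc : ConvexOn ℝ Set.univ (h ∘ A) := by
    simpa using hconv.comp_affineMap A
  have hc : HasDerivAt (fun t : ℝ => A t) (a - b) 0 := by
    simp only [hA, AffineMap.coe_lineMap]
    simpa using ((hasDerivAt_id (0:ℝ)).smul_const (a - b)).add_const b
  have hd : HasDerivAt (h ∘ A) ⟪h' b, a - b⟫ 0 := by
    have := (hhdiff (A 0)).comp_hasDerivAt 0 hc
    simpa [hA, AffineMap.lineMap_apply] using this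
  have := hφc.le_slope_of_hasDerivAt (Set.mem_univ 0) (Set.mem_univ 1)
    (by norm_num) hd
  simp [slope, hA, AffineMap.lineMap_apply] at this
  linarith

/-- Function Descent Property (one iteration of CoCaIn BPG): under the subgradient
inequality for the semi-convex function `f` at `x⁺`, the first-order optimality
condition of the Bregman proximal gradient step, and the minorant/majorant
inequalities for `g` with parameters `L` and `L̄ ≤ 1/τ`, one has
`Ψ(x) ≥ Ψ(x⁺) + (1/τ)·D_h(x, x⁺) + (α/2)‖x⁺ - x‖² - (1/τ + L)·D_h(x, y)`,
where `Ψ = f + g` and `D_h(x, y) = h x - h y - ⟪∇h y, x - y⟫`. -/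
theorem function_descent_property
    {E : Type*} [NormedAddCommGroup E] [InnerProductSpace ℝ E]
    (f g h : E → ℝ) (g' h' : E → E)
    (hconv : ConvexOn ℝ Set.univ h)
    (hgdiff : ∀ z, HasFDerivAt g (innerSL ℝ (g' z)) z)
    (hhdiff : ∀ z, HasFDerivAt h (innerSL ℝ (h' z)) z)
    (α τ Lbar L : ℝ) (hτ : 0 < τ) (hτL : 1 / τ ≥ Lbar)
    (x xplus y ξ : E)
    (hsub : ∀ u : E, f u ≥ f xplus + ⟪ξ, u - xplus⟫ + (α / 2) * ‖u - xplus‖ ^ 2)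
    (hopt : ξ + g' y + (1 / τ) • (h' xplus - h' y) = 0)
    (hlow : g x ≥ g y + ⟪g' y, x - y⟫ - L * (h x - h y - ⟪h' y, x - y⟫))
    (hup : g xplus ≤ g y + ⟪g' y, xplus - y⟫ +
      Lbar * (h xplus - h y - ⟪h' y, xplus - y⟫)) :
    f x + g x ≥ f xplus + g xplus +
      (1 / τ) * (h x - h xplus - ⟪h' xplus, x - xplus⟫) +
      (α / 2) * ‖xplus - x‖ ^ 2 -
      (1 / τ + L) * (h x - h y - ⟪h' y, x - y⟫) := by
  have hDxy : 0 ≤ h xplus - h y - ⟪h' y, xplus - y⟫ :=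
    bregman_nonneg_s4 h h' hconv hhdiff xplus y
  have hx := hsub x
  have hξval : ξ = -(g' y) - (1 / τ) • (h' xplus - h' y) := by
    have := hopt
    rw [add_assoc] at this
    linear_combination (norm := module) this
  have hξ : ⟪ξ, x - xplus⟫ = -⟪g' y, x - xplus⟫ -
      (1 / τ) * (⟪h' xplus, x - xplus⟫ - ⟪h' y, x - xplus⟫) := by
    rw [hξval]
    simp [inner_sub_left, inner_neg_left, real_inner_smul_left]
  have hsplit : ⟪h' y, x - y⟫ = ⟪h' y, x - xplus⟫ + ⟪h' y, xplus - y⟫ := by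
    rw [← inner_add_right]
    congr 1
    abel
  have key : Lbar * (h xplus - h y - ⟪h' y, xplus - y⟫) ≤
      (1 / τ) * (h xplus - h y - ⟪h' y, xplus - y⟫) :=
    mul_le_mul_of_nonneg_right hτL hDxy
  have hn : ‖x - xplus‖ = ‖xplus - x‖ := norm_sub_rev _ _
  have hsplit2 : ⟪g' y, x - y⟫ = ⟪g' y, x - xplus⟫ + ⟪g' y, xplus - y⟫ := by
    rw [← inner_add_right]
    congr 1
    abel
  rw [hn, hξ] at hx
  rw [hsplit, hsplit2] at hlow
  rw [hsplit]
  ring_nf at hx hlow hup key ⊢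
  linarith
end

section
/- Let d, m ∈ ℕ, let a₁, …, a_m ∈ ℝ^d and b₁, …, b_m ∈ ℝ. Define g(x) := (1/4)·∑_{i=1}^m (⟨a_i, x⟩² − b_i²)² and h(x) := (1/4)‖x‖₂⁴ + (1/2)‖x‖₂². Then for every L ≥ ∑_{i=1}^m (3‖a_i‖₂⁴ + ‖a_i‖₂²·b_i²), the function L·h − g is convex on ℝ^d. (L-smooth adaptability of the phase retrieval objective with respect to the quartic kernel.) -/
/-!
Along a line `y = x + t • v`, the second derivative of `L • h - g` in `t` is the Hessian form
`L (2⟪y, v⟫² + (‖y‖² + 1)‖v‖²) - ∑ᵢ (3⟪aᵢ, y⟫² - bᵢ²)⟪aᵢ, v⟫²`. By Cauchy–Schwarz,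
`⟪aᵢ, y⟫²⟪aᵢ, v⟫² ≤ ‖aᵢ‖⁴‖y‖²‖v‖²`, so the sum is at most `∑ᵢ 3‖aᵢ‖⁴ (‖y‖² + 1)‖v‖²`, which the
bound on `L` dominates. Thus `L • h - g` is convex on every line, hence convex.
-/

open RealInnerProductSpace Set

theorem convexOn_univ_of_forall_convexOn_line {E : Type*} [AddCommGroup E] [Module ℝ E]
    {f : E → ℝ} (hf : ∀ x v : E, ConvexOn ℝ univ fun t : ℝ => f (x + t • v)) :
    ConvexOn ℝ univ f := by
  refine ⟨convex_univ, fun x _ y _ s t hs ht hst => ?_⟩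
  obtain rfl : s = 1 - t := by linarith
  have hline : (1 - t) • x + t • y = x + t • (y - x) := by module
  simpa [hline] using (hf x (y - x)).2 (mem_univ 0) (mem_univ 1) hs ht hst

section PhaseRetrieval

variable {E ι : Type*} [NormedAddCommGroup E] [InnerProductSpace ℝ E] [Fintype ι]

noncomputable def quarticKernel (x : E) : ℝ := (1 / 4) * ‖x‖ ^ 4 + (1 / 2) * ‖x‖ ^ 2

noncomputable def phaseRetrievalObjective (a : ι → E) (b : ι → ℝ) (x : E) : ℝ :=
  (1 / 4) * ∑ i, (⟪a i, x⟫ ^ 2 - (b i) ^ 2) ^ 2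

variable {γ : ℝ → E} {v : E} {t : ℝ}

theorem HasDerivAt.quarticKernel (hγ : HasDerivAt γ v t) :
    HasDerivAt (fun s => quarticKernel (γ s)) ((‖γ t‖ ^ 2 + 1) * ⟪γ t, v⟫) t := by
  have hp := hγ.norm_sq
  have e : (fun s => _root_.quarticKernel (γ s)) =
      fun s => (1 / 4) * (‖γ s‖ ^ 2) ^ 2 + (1 / 2) * ‖γ s‖ ^ 2 := by
    ext s; simp only [_root_.quarticKernel]; ring
  rw [e]
  exact (((hp.pow 2).const_mul _).add (hp.const_mul _)).congr_deriv (by push_cast; ring)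

theorem HasDerivAt.quarticKernel_deriv (hγ : HasDerivAt γ v t) :
    HasDerivAt (fun s => (‖γ s‖ ^ 2 + 1) * ⟪γ s, v⟫)
      (2 * ⟪γ t, v⟫ ^ 2 + (‖γ t‖ ^ 2 + 1) * ‖v‖ ^ 2) t := by
  refine ((hγ.norm_sq.add_const 1).mul (hγ.inner ℝ (hasDerivAt_const t v))).congr_deriv ?_
  rw [inner_zero_right, zero_add, real_inner_self_eq_norm_sq]
  ring

theorem HasDerivAt.phaseRetrievalObjective (a : ι → E) (b : ι → ℝ) (hγ : HasDerivAt γ v t) :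
    HasDerivAt (fun s => phaseRetrievalObjective a b (γ s))
      (∑ i, (⟪a i, γ t⟫ ^ 2 - b i ^ 2) * ⟪a i, γ t⟫ * ⟪a i, v⟫) t := by
  have hq (i : ι) : HasDerivAt (fun s => ⟪a i, γ s⟫) ⟪a i, v⟫ t := by
    simpa using (hasDerivAt_const t (a i)).inner ℝ hγ
  refine ((HasDerivAt.fun_sum (u := Finset.univ) fun i _ =>
    (((hq i).pow 2).sub_const (b i ^ 2)).pow 2).const_mul (1 / 4 : ℝ)).congr_deriv ?_
  simp only [Pi.pow_apply, Finset.mul_sum]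
  refine Finset.sum_congr rfl fun i _ => ?_
  push_cast; ring

theorem HasDerivAt.phaseRetrievalObjective_deriv (a : ι → E) (b : ι → ℝ)
    (hγ : HasDerivAt γ v t) :
    HasDerivAt (fun s => ∑ i, (⟪a i, γ s⟫ ^ 2 - b i ^ 2) * ⟪a i, γ s⟫ * ⟪a i, v⟫)
      (∑ i, (3 * ⟪a i, γ t⟫ ^ 2 - b i ^ 2) * ⟪a i, v⟫ ^ 2) t := by
  have hq (i : ι) : HasDerivAt (fun s => ⟪a i, γ s⟫) ⟪a i, v⟫ t := by
    simpa using (hasDerivAt_const t (a i)).inner ℝ hγ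
  refine (HasDerivAt.fun_sum (u := Finset.univ) fun i _ =>
    ((((hq i).pow 2).sub_const (b i ^ 2)).mul (hq i)).mul_const ⟪a i, v⟫).congr_deriv ?_
  refine Finset.sum_congr rfl fun i _ => ?_
  simp only [Pi.pow_apply]
  push_cast; ring

theorem sq_inner_mul_sq_inner_le (a y v : E) :
    ⟪a, y⟫ ^ 2 * ⟪a, v⟫ ^ 2 ≤ ‖a‖ ^ 4 * ‖y‖ ^ 2 * ‖v‖ ^ 2 := by
  have hy := sq_le_sq' (neg_le_of_abs_le (abs_real_inner_le_norm a y)) (real_inner_le_norm a y)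
  have hv := sq_le_sq' (neg_le_of_abs_le (abs_real_inner_le_norm a v)) (real_inner_le_norm a v)
  calc ⟪a, y⟫ ^ 2 * ⟪a, v⟫ ^ 2 ≤ (‖a‖ * ‖y‖) ^ 2 * (‖a‖ * ‖v‖) ^ 2 :=
        mul_le_mul hy hv (sq_nonneg _) (sq_nonneg _)
    _ = ‖a‖ ^ 4 * ‖y‖ ^ 2 * ‖v‖ ^ 2 := by ring

theorem phaseRetrieval_hessian_le (a : ι → E) (b : ι → ℝ) {L : ℝ}
    (hL : ∑ i, (3 * ‖a i‖ ^ 4 + ‖a i‖ ^ 2 * b i ^ 2) ≤ L) (y v : E) :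
    ∑ i, (3 * ⟪a i, y⟫ ^ 2 - b i ^ 2) * ⟪a i, v⟫ ^ 2 ≤
      L * (2 * ⟪y, v⟫ ^ 2 + (‖y‖ ^ 2 + 1) * ‖v‖ ^ 2) := by
  have hL0 : 0 ≤ L := (Finset.sum_nonneg fun i _ => by positivity).trans hL
  calc ∑ i, (3 * ⟪a i, y⟫ ^ 2 - b i ^ 2) * ⟪a i, v⟫ ^ 2
      ≤ ∑ i, (3 * ‖a i‖ ^ 4 + ‖a i‖ ^ 2 * b i ^ 2) * ((‖y‖ ^ 2 + 1) * ‖v‖ ^ 2) :=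
        Finset.sum_le_sum fun i _ => by
          nlinarith [sq_inner_mul_sq_inner_le (a i) y v, sq_nonneg (b i * ⟪a i, v⟫),
            mul_nonneg (pow_nonneg (norm_nonneg (a i)) 4) (sq_nonneg ‖v‖),
            mul_nonneg (sq_nonneg (‖a i‖ * b i)) (mul_nonneg (add_nonneg (sq_nonneg ‖y‖)
              zero_le_one) (sq_nonneg ‖v‖))]
    _ = (∑ i, (3 * ‖a i‖ ^ 4 + ‖a i‖ ^ 2 * b i ^ 2)) * ((‖y‖ ^ 2 + 1) * ‖v‖ ^ 2) :=
        (Finset.sum_mul ..).symm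
    _ ≤ L * ((‖y‖ ^ 2 + 1) * ‖v‖ ^ 2) := by gcongr
    _ ≤ L * (2 * ⟪y, v⟫ ^ 2 + (‖y‖ ^ 2 + 1) * ‖v‖ ^ 2) := by gcongr; nlinarith [sq_nonneg ⟪y, v⟫]

theorem convexOn_mul_quarticKernel_sub_phaseRetrievalObjective (a : ι → E) (b : ι → ℝ) {L : ℝ}
    (hL : ∑ i, (3 * ‖a i‖ ^ 4 + ‖a i‖ ^ 2 * b i ^ 2) ≤ L) :
    ConvexOn ℝ univ fun x => L * quarticKernel x - phaseRetrievalObjective a b x := by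
  refine convexOn_univ_of_forall_convexOn_line fun x v => ?_
  have hγ (t : ℝ) : HasDerivAt (fun s : ℝ => x + s • v) v t := by
    simpa using ((hasDerivAt_id t).smul_const v).const_add x
  have hf (t : ℝ) := ((hγ t).quarticKernel.const_mul L).sub ((hγ t).phaseRetrievalObjective a b)
  have hf' (t : ℝ) :=
    ((hγ t).quarticKernel_deriv.const_mul L).sub ((hγ t).phaseRetrievalObjective_deriv a b)
  refine convexOn_of_hasDerivWithinAt2_nonneg convex_univ
    (fun t _ => (hf t).continuousAt.continuousWithinAt)
    (fun t _ => (hf t).hasDerivWithinAt) (fun t _ => (hf' t).hasDerivWithinAt)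
    fun t _ => sub_nonneg.2 (phaseRetrieval_hessian_le a b hL _ v)

end PhaseRetrieval

/-- L-smooth adaptability of the phase retrieval objective with respect to the
quartic kernel: with `g(x) = (1/4)∑ᵢ (⟪aᵢ, x⟫² - bᵢ²)²` and
`h(x) = (1/4)‖x‖⁴ + (1/2)‖x‖²` on `ℝ^d`, for every
`L ≥ ∑ᵢ (3‖aᵢ‖⁴ + ‖aᵢ‖²·bᵢ²)` the function `L·h - g` is convex on `ℝ^d`. -/
theorem phase_retrieval_smad (d m : ℕ)
    (a : Fin m → EuclideanSpace ℝ (Fin d)) (b : Fin m → ℝ)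
    (L : ℝ) (hL : L ≥ ∑ i, (3 * ‖a i‖ ^ 4 + ‖a i‖ ^ 2 * (b i) ^ 2)) :
    ConvexOn ℝ Set.univ (fun x : EuclideanSpace ℝ (Fin d) =>
      L * ((1 / 4) * ‖x‖ ^ 4 + (1 / 2) * ‖x‖ ^ 2) -
        (1 / 4) * ∑ i, (⟪a i, x⟫ ^ 2 - (b i) ^ 2) ^ 2) :=
  convexOn_mul_quarticKernel_sub_phaseRetrievalObjective a b hL
end

section
/- Let E be a real inner product space and define h : E → ℝ by h(x) := (1/4)‖x‖⁴ + (1/2)‖x‖². Then h is twice differentiable, and for all x, a ∈ E the quadratic form of the second derivative satisfies ⟨a, ∇²h(x) a⟩ = 2⟨a, x⟩² + ‖x‖²‖a‖² + ‖a‖², and hence ⟨a, ∇²h(x) a⟩ ≤ 3‖x‖²‖a‖² + ‖a‖². -/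
/-!
Write `h(z) = φ(‖z‖²)` with `φ t = t²/4 + t/2`. The chain rule gives `∇h(x) = 2 φ'(‖x‖²) x = (‖x‖² + 1) x`,
and differentiating `z ↦ ψ(‖z‖²) z` with `ψ t = t + 1` gives `∇²h(x) = 2 x ⊗ x + (‖x‖² + 1) I`, whose quadratic
form in `a` is `2⟪a, x⟫² + (‖x‖² + 1)‖a‖²`. Cauchy–Schwarz bounds `⟪a, x⟫²` by `‖x‖²‖a‖²`.
-/

open RealInnerProductSpace

section RadialCalculus

variable {E : Type*} [NormedAddCommGroup E] [InnerProductSpace ℝ E]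

theorem HasDerivAt.hasFDerivAt_comp_norm_sq {φ : ℝ → ℝ} {φ' : ℝ} {x : E}
    (hφ : HasDerivAt φ φ' (‖x‖ ^ 2)) :
    HasFDerivAt (fun z : E => φ (‖z‖ ^ 2)) (innerSL ℝ ((2 * φ') • x)) x := by
  refine (hφ.comp_hasFDerivAt x (hasStrictFDerivAt_norm_sq x).hasFDerivAt).congr_fderiv ?_
  ext a
  simp only [smul_apply, coe_innerSL_apply, nsmul_eq_mul, Nat.cast_ofNat, smul_eq_mul, map_smul]
  ring

theorem HasDerivAt.hasFDerivAt_comp_norm_sq_smul {ψ : ℝ → ℝ} {ψ' : ℝ} {x : E}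
    (hψ : HasDerivAt ψ ψ' (‖x‖ ^ 2)) :
    HasFDerivAt (fun z : E => ψ (‖z‖ ^ 2) • z)
      (((2 * ψ') • innerSL ℝ x).smulRight x + ψ (‖x‖ ^ 2) • ContinuousLinearMap.id ℝ E) x := by
  refine (hψ.hasFDerivAt_comp_norm_sq.smul (hasFDerivAt_id x)).congr_fderiv ?_
  ext a
  simp only [map_smul, id_eq, add_apply, smul_apply, ContinuousLinearMap.id_apply,
    ContinuousLinearMap.smulRight_apply, coe_innerSL_apply, smul_eq_mul]
  exact add_comm _ _

theorem inner_smulRight_add_smul_id_self (c d : ℝ) (x a : E) :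
    ⟪a, ((c • innerSL ℝ x).smulRight x + d • ContinuousLinearMap.id ℝ E) a⟫
      = c * ⟪a, x⟫ ^ 2 + d * ‖a‖ ^ 2 := by
  simp only [add_apply, ContinuousLinearMap.smulRight_apply, smul_apply, coe_innerSL_apply,
    smul_eq_mul, ContinuousLinearMap.id_apply, inner_add_right, inner_smul_right, real_inner_comm,
    real_inner_self_eq_norm_sq]
  ring

theorem real_inner_sq_le_norm_sq_mul_norm_sq (a x : E) : ⟪a, x⟫ ^ 2 ≤ ‖a‖ ^ 2 * ‖x‖ ^ 2 := by
  rw [← mul_pow, ← sq_abs]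
  exact pow_le_pow_left₀ (abs_nonneg _) (abs_real_inner_le_norm a x) 2

end RadialCalculus

/-- The quartic kernel `h(x) = (1/4)‖x‖⁴ + (1/2)‖x‖²` is twice differentiable:
there is a gradient map `h'` and a second derivative (Hessian) map `H` such that
for all `x, a ∈ E` the quadratic form satisfies
`⟪a, ∇²h(x) a⟫ = 2⟪a, x⟫² + ‖x‖²‖a‖² + ‖a‖²`, and hence
`⟪a, ∇²h(x) a⟫ ≤ 3‖x‖²‖a‖² + ‖a‖²`. -/
theorem quartic_kernel_hessian
    {E : Type*} [NormedAddCommGroup E] [InnerProductSpace ℝ E] :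
    ∃ (h' : E → E) (H : E → E →L[ℝ] E),
      (∀ x : E, HasFDerivAt (fun z : E => (1 / 4) * ‖z‖ ^ 4 + (1 / 2) * ‖z‖ ^ 2)
        (innerSL ℝ (h' x)) x) ∧
      (∀ x : E, HasFDerivAt h' (H x) x) ∧
      (∀ x a : E, ⟪a, H x a⟫ = 2 * ⟪a, x⟫ ^ 2 + ‖x‖ ^ 2 * ‖a‖ ^ 2 + ‖a‖ ^ 2) ∧
      (∀ x a : E, ⟪a, H x a⟫ ≤ 3 * ‖x‖ ^ 2 * ‖a‖ ^ 2 + ‖a‖ ^ 2) := by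
  refine ⟨fun x => (‖x‖ ^ 2 + 1) • x,
    fun x => ((2 : ℝ) • innerSL ℝ x).smulRight x + (‖x‖ ^ 2 + 1) • ContinuousLinearMap.id ℝ E,
    fun x => ?_, fun x => ?_, fun x a => ?_, fun x a => ?_⟩
  · have hφ : HasDerivAt (fun t : ℝ => 1 / 4 * t ^ 2 + 1 / 2 * t) ((‖x‖ ^ 2 + 1) / 2) (‖x‖ ^ 2) := by
      refine (((hasDerivAt_pow 2 _).const_mul (1 / 4 : ℝ)).add
        ((hasDerivAt_id' _).const_mul (1 / 2 : ℝ))).congr_deriv ?_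
      norm_num
      ring
    convert hφ.hasFDerivAt_comp_norm_sq using 2
    · ring
    · rw [mul_div_cancel₀ _ two_ne_zero]
  · simpa using ((hasDerivAt_id (‖x‖ ^ 2)).add_const 1).hasFDerivAt_comp_norm_sq_smul
  · rw [inner_smulRight_add_smul_id_self]
    ring
  · rw [inner_smulRight_add_smul_id_self]
    nlinarith [real_inner_sq_le_norm_sq_mul_norm_sq a x]
end

section
/- Let E be a real inner product space, let μ ≥ 0, and let p ∈ E with p ≠ 0. Then the cubic equation t³‖p‖² + (1 + μ)t + 1 = 0 has a unique real root t*, this root satisfies t* < 0, and the point u* := t*·p is the unique global minimizer over E of the function φ(u) := (1/4)‖u‖⁴ + ((1 + μ)/2)‖u‖² + ⟨p, u⟩. (Closed-form solution of the squared-ℓ₂ regularized Bregman proximal gradient subproblem with the quartic kernel.) -/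
open RealInnerProductSpace

set_option maxHeartbeats 1000000

/-- Closed-form solution of the squared-ℓ₂ regularized Bregman proximal gradient
subproblem with the quartic kernel: for `μ ≥ 0` and `p ≠ 0`, the cubic equation
`t³‖p‖² + (1 + μ)t + 1 = 0` has a unique real root `t*`; this root is negative,
and `u* = t*·p` is the unique global minimizer over `E` of
`φ(u) = (1/4)‖u‖⁴ + ((1 + μ)/2)‖u‖² + ⟪p, u⟫`. -/
theorem quartic_subproblem_closed_form
    {E : Type*} [NormedAddCommGroup E] [InnerProductSpace ℝ E]
    (μ : ℝ) (hμ : 0 ≤ μ) (p : E) (hp : p ≠ 0) :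
    ∃ t : ℝ,
      (t ^ 3 * ‖p‖ ^ 2 + (1 + μ) * t + 1 = 0) ∧
      (∀ s : ℝ, s ^ 3 * ‖p‖ ^ 2 + (1 + μ) * s + 1 = 0 → s = t) ∧
      t < 0 ∧
      (∀ u : E,
        (1 / 4) * ‖t • p‖ ^ 4 + ((1 + μ) / 2) * ‖t • p‖ ^ 2 + ⟪p, t • p⟫ ≤
          (1 / 4) * ‖u‖ ^ 4 + ((1 + μ) / 2) * ‖u‖ ^ 2 + ⟪p, u⟫) ∧
      (∀ u : E,
        (1 / 4) * ‖u‖ ^ 4 + ((1 + μ) / 2) * ‖u‖ ^ 2 + ⟪p, u⟫ =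
          (1 / 4) * ‖t • p‖ ^ 4 + ((1 + μ) / 2) * ‖t • p‖ ^ 2 + ⟪p, t • p⟫ →
        u = t • p) := by
  set n : ℝ := ‖p‖ with hn_def
  have hn : 0 < n := norm_pos_iff.mpr hp
  set f : ℝ → ℝ := fun t => t ^ 3 * n ^ 2 + (1 + μ) * t + 1 with hf_def
  -- existence of a root in [-1, 0]
  have hcont : Continuous f := by fun_prop
  have hmem : (0 : ℝ) ∈ Set.Icc (f (-1)) (f 0) := by
    constructor
    · simp only [hf_def]; nlinarith [sq_nonneg n]
    · simp only [hf_def]; norm_num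
  obtain ⟨t, -, ht⟩ := intermediate_value_Icc (by norm_num : (-1:ℝ) ≤ 0)
    hcont.continuousOn hmem
  have ht : t ^ 3 * n ^ 2 + (1 + μ) * t + 1 = 0 := ht
  -- strict monotonicity of f
  have hmono : StrictMono f := by
    intro x y hxy
    simp only [hf_def]
    nlinarith [sq_nonneg (x + y), sq_nonneg x, sq_nonneg y,
      mul_pos (mul_pos (sub_pos.mpr hxy) hn) hn,
      mul_nonneg (mul_nonneg (sub_pos.mpr hxy).le
        (by nlinarith [sq_nonneg (x + y), sq_nonneg x, sq_nonneg y] :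
          (0:ℝ) ≤ x ^ 2 + x * y + y ^ 2)) (sq_nonneg n)]
  have htneg : t < 0 := by
    by_contra h
    push_neg at h
    nlinarith [pow_nonneg h 3, mul_nonneg h hμ]
  -- basic facts about u* = t • p
  have hnorm_tp : ‖t • p‖ = -t * n := by
    rw [norm_smul, Real.norm_eq_abs, abs_of_neg htneg]
  have hinner_tp : ⟪p, t • p⟫ = t * n ^ 2 := by
    rw [real_inner_smul_right, real_inner_self_eq_norm_sq]
  obtain ⟨s, hs_def⟩ : ∃ s : ℝ, s = -t * n := ⟨_, rfl⟩
  rw [← hs_def] at hnorm_tp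
  have hs : 0 < s := hs_def ▸ mul_pos (neg_pos.mpr htneg) hn
  have hsn : s ^ 3 + (1 + μ) * s = n := by
    rw [hs_def]; linear_combination (-n) * ht
  have htn : t * n ^ 2 = -(n * s) := by rw [hs_def]; ring
  refine ⟨t, ht, ?_, htneg, ?_, ?_⟩
  · intro s' hs'
    exact hmono.injective (hs'.trans ht.symm)
  · -- minimality
    intro u
    have hip : -(n * ‖u‖) ≤ ⟪p, u⟫ := by
      have h1 := abs_real_inner_le_norm p u
      have h2 := neg_abs_le (⟪p, u⟫)
      rw [← hn_def] at h1
      linarith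
    set r : ℝ := ‖u‖ with hr_def
    have hr : 0 ≤ r := norm_nonneg u
    rw [hnorm_tp, hinner_tp, htn]
    have hb : (0:ℝ) ≤ r ^ 2 + 2 * r * s + 3 * s ^ 2 + 2 * (1 + μ) := by
      nlinarith [mul_nonneg hr hs.le, sq_nonneg r, sq_nonneg s]
    have hid : 1 / 4 * r ^ 4 + (1 + μ) / 2 * r ^ 2 - n * r
        - (1 / 4 * s ^ 4 + (1 + μ) / 2 * s ^ 2 - n * s)
        = 1 / 4 * (r - s) ^ 2 * (r ^ 2 + 2 * r * s + 3 * s ^ 2 + 2 * (1 + μ)) := by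
      linear_combination (r - s) * hsn
    nlinarith [mul_nonneg (sq_nonneg (r - s)) hb, hip]
  · -- uniqueness of the minimizer
    intro u hEq
    set r : ℝ := ‖u‖ with hr_def
    have hr : 0 ≤ r := norm_nonneg u
    have hip : -(n * r) ≤ ⟪p, u⟫ := by
      have h1 := abs_real_inner_le_norm p u
      have h2 := neg_abs_le (⟪p, u⟫)
      rw [← hn_def, ← hr_def] at h1
      linarith
    have hb : (0:ℝ) ≤ r ^ 2 + 2 * r * s + 3 * s ^ 2 + 2 * (1 + μ) := by
      nlinarith [mul_nonneg hr hs.le, sq_nonneg r, sq_nonneg s]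
    rw [hnorm_tp, hinner_tp, htn] at hEq
    have hid : 1 / 4 * r ^ 4 + (1 + μ) / 2 * r ^ 2 - n * r
        - (1 / 4 * s ^ 4 + (1 + μ) / 2 * s ^ 2 - n * s)
        = 1 / 4 * (r - s) ^ 2 * (r ^ 2 + 2 * r * s + 3 * s ^ 2 + 2 * (1 + μ)) := by
      linear_combination (r - s) * hsn
    have hsum : (⟪p, u⟫ + n * r)
        + 1 / 4 * ((r - s) ^ 2 * (r ^ 2 + 2 * r * s + 3 * s ^ 2 + 2 * (1 + μ))) = 0 := by
      linear_combination hEq - hid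
    have h1 : (0:ℝ) ≤ ⟪p, u⟫ + n * r := by linarith
    have h2' : (0:ℝ) ≤ (r - s) ^ 2 * (r ^ 2 + 2 * r * s + 3 * s ^ 2 + 2 * (1 + μ)) :=
      mul_nonneg (sq_nonneg _) hb
    have h2 : (r - s) ^ 2 * (r ^ 2 + 2 * r * s + 3 * s ^ 2 + 2 * (1 + μ)) = 0 := by
      linarith
    have hcsze : ⟪p, u⟫ = -(n * r) := by linarith
    have hbpos : (0:ℝ) < r ^ 2 + 2 * r * s + 3 * s ^ 2 + 2 * (1 + μ) := by
      nlinarith [mul_nonneg hr hs.le, sq_nonneg r, sq_nonneg s]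
    have hrs : r = s := by
      rcases mul_eq_zero.mp h2 with h | h
      · have := pow_eq_zero_iff (n := 2) (by norm_num) |>.mp h
        linarith [sub_eq_zero.mp this]
      · linarith
    -- Cauchy-Schwarz equality case
    have hcs : ⟪p, -u⟫ = ‖p‖ * ‖-u‖ := by
      rw [inner_neg_right, norm_neg, ← hn_def, ← hr_def, hcsze]
      ring
    have heq := inner_eq_norm_mul_iff_real.mp hcs
    rw [norm_neg, ← hn_def, ← hr_def, hrs, smul_neg] at heq
    -- heq : s • p = -(n • u)
    have hfin : n • u = n • (t • p) := by
      have h3 : n • u = (-s) • p := by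
        rw [neg_smul, heq, neg_neg]
      rw [h3, smul_smul, hs_def]
      congr 1
      ring
    exact smul_right_injective E (ne_of_gt hn) hfin
end
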